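/- Let Q be a graded ring, g ∈ Q_2 a non-zero-divisor, R = Q/(g), and M a graded R-module admitting a length-one graded free resolution 0 → Q^p(−1) → Q^p → M → 0 over Q. Then over R there is an exact sequence 0 → M(−2) → R^p(−1) → R^p → M → 0; that is, M is linear of period 2 over R. -/

import Mathlib

/-- A standard graded `k`-algebra structure on `R`, recorded via a family of
`k`-submodules `𝒜 j` (the graded components): `R = ⊕ 𝒜 j`, `𝒜 j = 0` for `j < 0`,
`𝒜 0 = k·1`, `R` is generated in degree one, and all components are finite dimensional. -/
structure IsStandardGraded (k : Type*) [Field k] (R : Type*) [CommRing R] [Algebra k R]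
    (𝒜 : ℤ → Submodule k R) : Prop where
  internal : DirectSum.IsInternal 𝒜
  one_mem : (1 : R) ∈ 𝒜 0
  mul_mem : ∀ ⦃i j : ℤ⦄ ⦃x y : R⦄, x ∈ 𝒜 i → y ∈ 𝒜 j → x * y ∈ 𝒜 (i + j)
  bot_of_neg : ∀ i : ℤ, i < 0 → 𝒜 i = ⊥
  deg_zero : 𝒜 0 = Submodule.span k {(1 : R)}
  gen_in_deg_one : ∀ i : ℤ, 0 ≤ i → 𝒜 (i + 1) = 𝒜 1 * 𝒜 i
  finite_dim : ∀ i : ℤ, FiniteDimensional k (𝒜 i)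

/-- A grading on an `R`-module `M` compatible with a grading `𝒜` on `R`,
with finite-dimensional components. -/
structure IsGradedModule (k : Type*) [Field k] (R : Type*) [CommRing R] [Algebra k R]
    (𝒜 : ℤ → Submodule k R) (M : Type*) [AddCommGroup M] [Module R M] [Module k M]
    [IsScalarTower k R M] (ℳ : ℤ → Submodule k M) : Prop where
  internal : DirectSum.IsInternal ℳ
  smul_mem : ∀ ⦃i j : ℤ⦄ ⦃x : R⦄ ⦃m : M⦄, x ∈ 𝒜 i → m ∈ ℳ j → x • m ∈ ℳ (i + j)
  finite_dim : ∀ j : ℤ, FiniteDimensional k (ℳ j)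

/-- A linear (minimal, degree-`d`) free resolution of the graded `R`-module `M`:
an exact complex `⋯ → R(−d−n−1)^{β (n+1)} → R(−d−n)^{β n} → ⋯ → R(−d)^{β 0} → M → 0`
in which every differential is given by a matrix with entries in `R₁ = 𝒜 1`, and the
generators of the `n`-th free module map to degree `d + n`. Its existence says exactly
that `M` is a linear module with `indeg M = d` (a Koszul module when `d = 0`). -/
structure LinearResolution (k : Type*) [Field k] (R : Type*) [CommRing R] [Algebra k R]
    (𝒜 : ℤ → Submodule k R) (M : Type*) [AddCommGroup M] [Module R M] [Module k M]
    [IsScalarTower k R M] (ℳ : ℤ → Submodule k M) (d : ℤ) where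
  β : ℕ → ℕ
  dd : ∀ n : ℕ, (Fin (β (n + 1)) → R) →ₗ[R] (Fin (β n) → R)
  aug : (Fin (β 0) → R) →ₗ[R] M
  aug_surjective : Function.Surjective aug
  aug_deg : ∀ i, aug (Pi.single i 1) ∈ ℳ d
  dd_linear : ∀ (n : ℕ) (i : Fin (β (n + 1))) (j : Fin (β n)),
    dd n (Pi.single i 1) j ∈ 𝒜 1
  exact_aug : Function.Exact (dd 0) aug
  exact_dd : ∀ n : ℕ, Function.Exact (dd (n + 1)) (dd n)

/-- `R` is a Koszul algebra: the residue field `k = R/R₊ = R/(R₁)` has a linear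
free resolution over `R`. -/
def IsKoszulAlgebra (k : Type*) [Field k] (R : Type*) [CommRing R] [Algebra k R]
    (𝒜 : ℤ → Submodule k R) : Prop :=
  Nonempty (LinearResolution k R 𝒜 (R ⧸ Ideal.span (𝒜 1 : Set R))
    (fun j => (𝒜 j).map ((Ideal.span (𝒜 1 : Set R)).mkQ.restrictScalars k)) 0)

/-!
Multiplication by `g` maps the resolution `0 → Q^p → Q^p → M → 0` to itself; it is injective on
the free modules and zero on `M`, since `M` is a module over `R = Q ⧸ (g)`. The snake lemma for
this map gives `0 → M → R^p → R^p → M → 0`, whose connecting map sends `aug x` to the class of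
the unique `z` with `φ z = g • x`. An element of `M_j` lifts to an `x` homogeneous of degree `j`;
then `φ z = g • x` has degree `j + 2`, and as `φ` is injective and raises degrees by one, `z` is
homogeneous of degree `j + 1`.
-/

open Function

section Reduction

variable {Q R N σ : Type*} [CommRing Q] [CommRing R] [Algebra Q R] [AddCommGroup N] [Module Q N]
  [Module R N] [IsScalarTower Q R N]

theorem Fintype.linearCombination_compLeft [Fintype σ] [DecidableEq σ] (f : (σ → Q) →ₗ[Q] N)
    (x : σ → Q) :
    Fintype.linearCombination R (fun i => f (Pi.single i 1))
      ((Algebra.linearMap Q R).compLeft σ x) = f x := by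
  conv_rhs => rw [← Finset.univ_sum_single x, map_sum]
  simp only [Fintype.linearCombination_apply, LinearMap.compLeft_apply, comp_apply,
    Algebra.linearMap_apply, algebraMap_smul]
  refine Finset.sum_congr rfl fun i _ => ?_
  rw [← map_smul, ← Pi.single_smul, smul_eq_mul, mul_one]

theorem Ideal.Quotient.exact_smul_compLeft_mk (g : Q) :
    Exact (g • LinearMap.id : (σ → Q) →ₗ[Q] σ → Q)
      ((Algebra.linearMap Q (Q ⧸ Ideal.span {g})).compLeft σ) := by
  intro x
  simp only [funext_iff, LinearMap.compLeft_apply, comp_apply, Algebra.linearMap_apply,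
    Ideal.Quotient.algebraMap_eq, Pi.zero_apply, Ideal.Quotient.eq_zero_iff_mem,
    Ideal.mem_span_singleton', Set.mem_range, LinearMap.smul_apply, LinearMap.id_apply,
    Pi.smul_apply, smul_eq_mul]
  constructor
  · intro h
    choose c hc using h
    exact ⟨c, fun i => by rw [mul_comm, hc]⟩
  · rintro ⟨c, hc⟩ i
    exact ⟨c i, by rw [mul_comm, hc]⟩

end Reduction

section Connecting

variable {Q : Type*} [CommRing Q] {g : Q} {M : Type*} [AddCommGroup M] [Module Q M]
  [Module (Q ⧸ Ideal.span {g}) M] [IsScalarTower Q (Q ⧸ Ideal.span {g}) M] {σ₀ σ₁ : Type*}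

variable (g) in
theorem smul_eq_zero_of_isScalarTower_quotient (m : M) : g • m = 0 := by
  rw [← algebraMap_smul (Q ⧸ Ideal.span {g}) g m, Ideal.Quotient.algebraMap_eq,
    Ideal.Quotient.mk_singleton_self, zero_smul]

theorem exists_connecting_injective_exact (hg : IsSMulRegular (σ₀ → Q) g)
    {φ : (σ₁ → Q) →ₗ[Q] σ₀ → Q} (hφ : Injective φ) {aug : (σ₀ → Q) →ₗ[Q] M}
    (haug : Surjective aug) (hex : Exact φ aug)
    (ψ : (σ₁ → Q ⧸ Ideal.span {g}) →ₗ[Q ⧸ Ideal.span {g}] σ₀ → Q ⧸ Ideal.span {g})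
    (hψ : ∀ x, ψ ((Algebra.linearMap Q _).compLeft σ₁ x) =
      (Algebra.linearMap Q _).compLeft σ₀ (φ x)) :
    ∃ ι : M →ₗ[Q ⧸ Ideal.span {g}] σ₁ → Q ⧸ Ideal.span {g}, Injective ι ∧ Exact ι ψ ∧
      ∀ x, ∃ z, φ z = g • x ∧ ι (aug x) = (Algebra.linearMap Q _).compLeft σ₁ z := by
  have hgM : Exact (LinearMap.id : M →ₗ[Q] M) (g • LinearMap.id : M →ₗ[Q] M) := fun m => by
    simpa using smul_eq_zero_of_isScalarTower_quotient g m
  have hφg : φ ∘ₗ (g • LinearMap.id) = (g • LinearMap.id) ∘ₗ φ := by ext; simp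
  have haug_g : aug ∘ₗ (g • LinearMap.id) = (g • LinearMap.id) ∘ₗ aug := by ext; simp
  have hred₁ := Ideal.Quotient.exact_smul_compLeft_mk (σ := σ₁) g
  have hred₀ := Ideal.Quotient.exact_smul_compLeft_mk (σ := σ₀) g
  -- the snake lemma for `g • ·` acting on `0 → Q^σ₁ → Q^σ₀ → M → 0`, whose kernel on `M` is `M`
  let δ := SnakeLemma.δ' _ _ _ φ aug hex φ aug hex hφg haug_g LinearMap.id hgM _ hred₁ haug hφ
  have hδ_inj : Injective δ := by
    -- the snake sequence begins with the kernel of `g • ·` on `Q^σ₀`, which is zero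
    have hg_ker : Exact (0 : PUnit →ₗ[Q] σ₀ → Q) (g • LinearMap.id : (σ₀ → Q) →ₗ[Q] σ₀ → Q) :=
      (LinearMap.exact_zero_iff_injective _ _).mpr fun _ _ h => hg h
    refine (LinearMap.exact_zero_iff_injective PUnit δ).mp ?_
    exact SnakeLemma.exact_δ'_right _ _ _ _ _ _ _ _ _ _ _ _ hg_ker _ _ _ _ haug hφ 0 (by simp)
      fun _ _ h => h
  have hδψ : Exact δ ψ := SnakeLemma.exact_δ'_left _ _ _ _ _ _ _ _ _ _ _ _ _ _ _ _ hred₀ haug hφ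
    (ψ.restrictScalars Q) (LinearMap.ext hψ) Ideal.Quotient.mk_surjective.comp_left
  refine ⟨δ.extendScalarsOfSurjective Ideal.Quotient.mk_surjective, hδ_inj, hδψ, fun x => ?_⟩
  obtain ⟨z, hz⟩ := (hex (g • x)).mp (by rw [map_smul, smul_eq_zero_of_isScalarTower_quotient])
  exact ⟨z, hz, SnakeLemma.δ'_eq _ _ _ φ aug hex φ aug hex hφg haug_g LinearMap.id hgM _ hred₁
    haug hφ _ x rfl z hz⟩

theorem exists_exact_quotient_of_resolution [Fintype σ₀] [DecidableEq σ₀] [Fintype σ₁]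
    [DecidableEq σ₁] (hg : IsSMulRegular (σ₀ → Q) g)
    {φ : (σ₁ → Q) →ₗ[Q] σ₀ → Q} (hφ : Injective φ) {aug : (σ₀ → Q) →ₗ[Q] M}
    (haug : Surjective aug) (hex : Exact φ aug) :
    ∃ (ι : M →ₗ[Q ⧸ Ideal.span {g}] σ₁ → Q ⧸ Ideal.span {g})
      (ψ : (σ₁ → Q ⧸ Ideal.span {g}) →ₗ[Q ⧸ Ideal.span {g}] σ₀ → Q ⧸ Ideal.span {g})
      (π : (σ₀ → Q ⧸ Ideal.span {g}) →ₗ[Q ⧸ Ideal.span {g}] M),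
      Injective ι ∧ Surjective π ∧ Exact ι ψ ∧ Exact ψ π ∧
      (∀ x, ∃ z, φ z = g • x ∧ ι (aug x) = (Algebra.linearMap Q _).compLeft σ₁ z) ∧
      (∀ x, ψ ((Algebra.linearMap Q _).compLeft σ₁ x) =
        (Algebra.linearMap Q _).compLeft σ₀ (φ x)) ∧
      ∀ x, π ((Algebra.linearMap Q _).compLeft σ₀ x) = aug x := by
  set red₁ := (Algebra.linearMap Q (Q ⧸ Ideal.span {g})).compLeft σ₁
  set red₀ := (Algebra.linearMap Q (Q ⧸ Ideal.span {g})).compLeft σ₀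
  have hred₁ : Surjective red₁ := Ideal.Quotient.mk_surjective.comp_left
  have hred₀ : Surjective red₀ := Ideal.Quotient.mk_surjective.comp_left
  let ψ := Fintype.linearCombination (Q ⧸ Ideal.span {g}) fun i => red₀ (φ (Pi.single i 1))
  let π := Fintype.linearCombination (Q ⧸ Ideal.span {g}) fun i => aug (Pi.single i 1)
  have hψ : ∀ x, ψ (red₁ x) = red₀ (φ x) := Fintype.linearCombination_compLeft (red₀ ∘ₗ φ)
  have hπ : ∀ x, π (red₀ x) = aug x := Fintype.linearCombination_compLeft aug
  obtain ⟨ι, hι, hιψ, hι_eq⟩ := exists_connecting_injective_exact hg hφ haug hex ψ hψ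
  refine ⟨ι, ψ, π, hι, fun m => ?_, hιψ, fun v => ⟨fun hv => ?_, ?_⟩, hι_eq, hψ, hπ⟩
  · obtain ⟨x, rfl⟩ := haug m
    exact ⟨red₀ x, hπ x⟩
  · obtain ⟨x, rfl⟩ := hred₀ v
    obtain ⟨y, rfl⟩ := (hex x).mp ((hπ x).symm.trans hv)
    exact ⟨red₁ y, hψ y⟩
  · rintro ⟨w, rfl⟩
    obtain ⟨y, rfl⟩ := hred₁ w
    rw [hψ, hπ, hex.apply_apply_eq_zero]

end Connecting

section Graded

variable {k ι A : Type*} [CommRing k] [AddCommGroup A] [Module k A]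

def piGrading (𝒜 : ι → Submodule k A) (σ : Type*) (d : ι) : Submodule k (σ → A) :=
  Submodule.pi Set.univ fun _ => 𝒜 d

variable {𝒜 : ι → Submodule k A} {σ : Type*}

theorem mem_piGrading {d : ι} {x : σ → A} : x ∈ piGrading 𝒜 σ d ↔ ∀ i, x i ∈ 𝒜 d := by
  simp [piGrading]

theorem iSup_piGrading_eq_top [Finite σ] (h : ⨆ d, 𝒜 d = ⊤) : ⨆ d, piGrading 𝒜 σ d = ⊤ := by
  classical
  have hsingle (i : σ) (a : A) : Pi.single i a ∈ ⨆ d, piGrading 𝒜 σ d := by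
    induction (h ▸ Submodule.mem_top : a ∈ ⨆ d, 𝒜 d) using Submodule.iSup_induction' with
    | mem d a ha =>
      refine Submodule.mem_iSup_of_mem d (mem_piGrading.mpr fun l => ?_)
      rcases eq_or_ne l i with rfl | hl
      · simpa using ha
      · simp [hl]
    | zero => simp
    | add a b _ _ ha hb => simpa [Pi.single_add] using add_mem ha hb
  have := Fintype.ofFinite σ
  refine eq_top_iff.mpr fun x _ => ?_
  rw [← Finset.univ_sum_single x]
  exact sum_mem fun i _ => hsingle i (x i)

theorem iSupIndep_piGrading (h : iSupIndep 𝒜) : iSupIndep (piGrading 𝒜 σ) := by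
  refine iSupIndep_def.mpr fun d => Submodule.disjoint_def.mpr fun x hx hsup => funext fun i => ?_
  have hle : ⨆ (e) (_ : e ≠ d), piGrading 𝒜 σ e ≤
      (⨆ (e) (_ : e ≠ d), 𝒜 e).comap (LinearMap.proj i) := iSup₂_le fun e he y hy =>
    Submodule.mem_iSup_of_mem e (Submodule.mem_iSup_of_mem he (mem_piGrading.mp hy i))
  exact Submodule.disjoint_def.mp (h d) (x i) (mem_piGrading.mp hx i) (hle hsup)

theorem exists_mem_apply_eq_of_apply_mem [AddGroup ι] {N F : Type*} [AddCommGroup N] [Module k N]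
    {𝒩 : ι → Submodule k N} [FunLike F A N] [AddMonoidHomClass F A N] (f : F)
    (h𝒜 : ⨆ d, 𝒜 d = ⊤) (h𝒩 : iSupIndep 𝒩) {s : ι} (hf : ∀ d, ∀ a ∈ 𝒜 d, f a ∈ 𝒩 (d + s))
    {a : A} {j : ι} (ha : f a ∈ 𝒩 (j + s)) : ∃ b ∈ 𝒜 j, f b = f a := by
  classical
  obtain ⟨c, hc, rfl⟩ := (Submodule.mem_iSup_iff_exists_finsupp 𝒜 a).mp (h𝒜 ▸ Submodule.mem_top)
  refine ⟨c j, hc j, ?_⟩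
  have hsum : (c.sum fun _ x => x) = ∑ d ∈ insert j c.support, c d :=
    Finsupp.sum_of_support_subset c (Finset.subset_insert _ _) _ fun _ _ => rfl
  let v d := f (c d) - if d = j then f (c.sum fun _ x => x) else 0
  have hv : ∀ d ∈ insert j c.support, v d ∈ 𝒩 (d + s) := fun d _ => by
    refine sub_mem (hf d _ (hc d)) ?_
    split_ifs with hd
    · exact hd ▸ ha
    · exact zero_mem _
  have hv0 : ∑ d ∈ insert j c.support, v d = 0 := by
    simp only [v, Finset.sum_sub_distrib, Finset.sum_ite_eq', Finset.mem_insert_self, if_true,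
      ← map_sum, hsum, sub_self]
  have := (iSupIndep_iff_finsetSum_eq_zero_imp_eq_zero _).mp
    (h𝒩.comp (add_left_injective s)) _ v hv hv0 j (Finset.mem_insert_self _ _)
  simpa [v, sub_eq_zero] using this

end Graded

section GradedMaps

variable {k ι Q N σ : Type*} [CommRing k] [CommRing Q] [Algebra k Q]
  [AddCommGroup N] [Module Q N] [Module k N] {𝒜 : ι → Submodule k Q} {𝒩 : ι → Submodule k N}

theorem smul_mem_piGrading [AddMonoid ι]
    (hmul : ∀ ⦃i j : ι⦄ ⦃a b : Q⦄, a ∈ 𝒜 i → b ∈ 𝒜 j → a * b ∈ 𝒜 (i + j))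
    ⦃i j : ι⦄ ⦃a : Q⦄ ⦃x : σ → Q⦄ (ha : a ∈ 𝒜 i) (hx : x ∈ piGrading 𝒜 σ j) :
    a • x ∈ piGrading 𝒜 σ (i + j) :=
  mem_piGrading.mpr fun l => hmul ha (mem_piGrading.mp hx l)

variable [Fintype σ] [DecidableEq σ]

theorem LinearMap.apply_mem_of_apply_single_mem [AddMonoid ι]
    (hsmul : ∀ ⦃i j : ι⦄ ⦃a : Q⦄ ⦃n : N⦄, a ∈ 𝒜 i → n ∈ 𝒩 j → a • n ∈ 𝒩 (i + j))
    (f : (σ → Q) →ₗ[Q] N) {e : ι} (hf : ∀ i, f (Pi.single i 1) ∈ 𝒩 e) {d : ι} {x : σ → Q}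
    (hx : x ∈ piGrading 𝒜 σ d) : f x ∈ 𝒩 (d + e) := by
  rw [← Finset.univ_sum_single x, map_sum]
  refine sum_mem fun i _ => ?_
  rw [← mul_one (x i), ← smul_eq_mul, Pi.single_smul, map_smul]
  exact hsmul (mem_piGrading.mp hx i) (hf i)

theorem LinearMap.exists_mem_piGrading_apply_eq [AddGroup ι] (h𝒜 : ⨆ d, 𝒜 d = ⊤) (h𝒩 : iSupIndep 𝒩)
    (hsmul : ∀ ⦃i j : ι⦄ ⦃a : Q⦄ ⦃n : N⦄, a ∈ 𝒜 i → n ∈ 𝒩 j → a • n ∈ 𝒩 (i + j))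
    (f : (σ → Q) →ₗ[Q] N) {e : ι} (hf : ∀ i, f (Pi.single i 1) ∈ 𝒩 e) {j : ι} {x : σ → Q}
    (hx : f x ∈ 𝒩 (j + e)) : ∃ y ∈ piGrading 𝒜 σ j, f y = f x :=
  exists_mem_apply_eq_of_apply_mem f (iSup_piGrading_eq_top h𝒜) h𝒩
    (fun _ _ => f.apply_mem_of_apply_single_mem hsmul hf) hx

theorem LinearMap.mem_piGrading_of_apply_mem [AddGroup ι] (h𝒜 : ⨆ d, 𝒜 d = ⊤) (h𝒩 : iSupIndep 𝒩)
    (hsmul : ∀ ⦃i j : ι⦄ ⦃a : Q⦄ ⦃n : N⦄, a ∈ 𝒜 i → n ∈ 𝒩 j → a • n ∈ 𝒩 (i + j))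
    {f : (σ → Q) →ₗ[Q] N} (hinj : Injective f) {e : ι} (hf : ∀ i, f (Pi.single i 1) ∈ 𝒩 e)
    {j : ι} {x : σ → Q} (hx : f x ∈ 𝒩 (j + e)) : x ∈ piGrading 𝒜 σ j := by
  obtain ⟨y, hy, hyx⟩ := f.exists_mem_piGrading_apply_eq h𝒜 h𝒩 hsmul hf hx
  exact hinj hyx ▸ hy

end GradedMaps

/-- part of Theorem 3.1(3), (v)⇒(vi): let `g ∈ Q₂` be a
non-zero-divisor, `R = Q/(g)`, and let `M` be a graded `R`-module with a length-one
graded free resolution `0 → Q^p(−1) → Q^p → M → 0` over `Q` (the presentation matrix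
`φ` has entries in `Q₁`). Then over `R` there is an exact sequence
`0 → M(−2) → R^p(−1) → R^p → M → 0`, i.e. `M` is linear of period 2 over `R`:
there are `R`-linear maps `ι, ψ, π` with `ι` injective, `π` surjective, the sequence
exact, `ψ` given by a matrix of elements of `R₁`, `π` sending generators to degree-0
elements of `M`, and `ι` sending `M_j` into degree `j+2` of `R^p(−1)` (entries in
the image of `𝒜 (j+1)`). -/
theorem stmt7 {k Q : Type*} [Field k] [CommRing Q] [Algebra k Q]
    (𝒜 : ℤ → Submodule k Q) (hQ : IsStandardGraded k Q 𝒜)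
    (g : Q) (hg2 : g ∈ 𝒜 2) (hreg : ∀ x : Q, g * x = 0 → x = 0)
    (M : Type*) [AddCommGroup M]
    [Module (Q ⧸ Ideal.span {g}) M] [Module Q M] [Module k M]
    [IsScalarTower Q (Q ⧸ Ideal.span {g}) M] [IsScalarTower k Q M]
    (ℳ : ℤ → Submodule k M)
    (hM : IsGradedModule k Q 𝒜 M ℳ)
    (p : ℕ)
    (φ : (Fin p → Q) →ₗ[Q] (Fin p → Q))
    (hφ1 : ∀ (i j : Fin p), φ (Pi.single i 1) j ∈ 𝒜 1)
    (hφinj : Function.Injective φ)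
    (augQ : (Fin p → Q) →ₗ[Q] M)
    (haug_surj : Function.Surjective augQ)
    (haug_deg : ∀ i, augQ (Pi.single i 1) ∈ ℳ 0)
    (hexQ : Function.Exact φ augQ) :
    ∃ (ι : M →ₗ[Q ⧸ Ideal.span {g}] (Fin p → Q ⧸ Ideal.span {g}))
      (ψ : (Fin p → Q ⧸ Ideal.span {g}) →ₗ[Q ⧸ Ideal.span {g}]
            (Fin p → Q ⧸ Ideal.span {g}))
      (π : (Fin p → Q ⧸ Ideal.span {g}) →ₗ[Q ⧸ Ideal.span {g}] M),
      Function.Injective ι ∧ Function.Surjective π ∧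
      Function.Exact ι ψ ∧ Function.Exact ψ π ∧
      (∀ (j : ℤ), ∀ m ∈ ℳ j, ∀ i : Fin p,
        ι m i ∈ (𝒜 (j + 1)).map
          (((Ideal.span {g} : Ideal Q).mkQ).restrictScalars k)) ∧
      (∀ (i j : Fin p), ψ (Pi.single i 1) j ∈ (𝒜 1).map
          (((Ideal.span {g} : Ideal Q).mkQ).restrictScalars k)) ∧
      (∀ i : Fin p, π (Pi.single i 1) ∈ ℳ 0) := by
  classical
  have hg : IsSMulRegular (Fin p → Q) g :=
    IsSMulRegular.pi fun _ => IsSMulRegular.of_right_eq_zero_of_smul hreg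
  have hQ_top := hQ.internal.submodule_iSup_eq_top
  have hred (i : Fin p) :
      (Algebra.linearMap Q (Q ⧸ Ideal.span {g})).compLeft _ (Pi.single i 1) = Pi.single i 1 := by
    ext l; by_cases h : l = i <;> simp [h]
  obtain ⟨ι, ψ, π, hι, hπ, hιψ, hψπ, hι_eq, hψ_eq, hπ_eq⟩ :=
    exists_exact_quotient_of_resolution hg hφinj haug_surj hexQ
  refine ⟨ι, ψ, π, hι, hπ, hιψ, hψπ, fun j m hm i => ?_, fun i j => ?_, fun i => ?_⟩
  · obtain ⟨x₀, rfl⟩ := haug_surj m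
    obtain ⟨x, hx, hxx₀⟩ := augQ.exists_mem_piGrading_apply_eq hQ_top
      hM.internal.submodule_iSupIndep hM.smul_mem haug_deg (j := j) (by rwa [add_zero])
    obtain ⟨z, hz, hιz⟩ := hι_eq x
    have hz_deg : z ∈ piGrading 𝒜 (Fin p) (j + 1) := by
      refine LinearMap.mem_piGrading_of_apply_mem hQ_top
        (iSupIndep_piGrading hQ.internal.submodule_iSupIndep) (smul_mem_piGrading hQ.mul_mem)
        hφinj (fun i => mem_piGrading.mpr (hφ1 i)) ?_
      rw [hz, add_assoc, one_add_one_eq_two, add_comm]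
      exact smul_mem_piGrading hQ.mul_mem hg2 hx
    rw [← hxx₀, hιz]
    exact ⟨z i, mem_piGrading.mp hz_deg i, rfl⟩
  · rw [← hred, hψ_eq]
    exact ⟨_, hφ1 i j, rfl⟩
  · rw [← hred, hπ_eq]
    exact haug_deg i
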